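/- arXiv:2109.11300 — 4 statements merged into one kernel-verified Lean document; each statement's English description precedes it below -/
import Mathlib

section
/- Let D = diag(λ₁,…,λ_n) with all λ_i > 0 and let β be a real skew-symmetric n×n matrix with ‖D^{-1/2} β D^{-1/2}‖ ≤ δ for some 0 < δ < 1 (operator norm). Set R = D + β. Then for every 1 ≤ k ≤ n: S_k(D) ≤ S_k(R) ≤ (1+δ²)^{⌊k/2⌋} S_k(D), where S_k denotes the sum of all principal k×k minors. -/
/-
Writing `D + β = D^{1/2} (1 + C) D^{1/2}` with `C = D^{-1/2} β D^{-1/2}`, every principal minor of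
`D + β` is the corresponding minor of `D` times `det (1 + A)`, where `A` is the principal submatrix
of `C`: again skew-symmetric, with `‖A‖ ≤ ‖C‖ ≤ δ`. For skew `A`,
`det (1 + A) ^ 2 = det ((1 + A) (1 + A)ᵀ) = det (1 + AᵀA) = ∏ (1 + μᵢ)` with `0 ≤ μᵢ ≤ ‖A‖ ^ 2`,
and one `μᵢ` vanishes when the size is odd because then `A` is singular. Finally `det (1 + A) > 0`
since `det (1 + t A)` never vanishes for real `t`, so `1 ≤ det (1 + A) ≤ (1 + δ ^ 2) ^ ⌊k/2⌋`.
-/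

open Matrix

/-- The sum of all principal k×k minors of a real n×n matrix. -/
noncomputable def Sk {n : ℕ} (k : ℕ) (M : Matrix (Fin n) (Fin n) ℝ) : ℝ :=
  ∑ s : {s : Finset (Fin n) // s.card = k},
    (M.submatrix (s.1.orderEmbOfFin s.2) (s.1.orderEmbOfFin s.2)).det

/-- The operator (spectral) norm of a real matrix. -/
noncomputable def opNorm {n : ℕ} (M : Matrix (Fin n) (Fin n) ℝ) : ℝ :=
  ‖(Matrix.toEuclideanCLM (𝕜 := ℝ) (n := Fin n)) M‖

open scoped Matrix.Norms.L2Operator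

section Hermitian
variable {ι : Type*} [Fintype ι] [DecidableEq ι]

lemma Matrix.IsHermitian.det_one_add {M : Matrix ι ι ℝ} (hM : M.IsHermitian) :
    (1 + M).det = ∏ i, (1 + hM.eigenvalues i) := by
  have : 1 + M = cfc (fun x : ℝ => 1 + x) M := by
    rw [cfc_const_add .., cfc_id' ℝ M, Algebra.algebraMap_eq_smul_one, one_smul]
  rw [this, hM.cfc_eq]
  simp [IsHermitian.cfc, -Unitary.conjStarAlgAut_apply]

lemma Matrix.IsHermitian.eigenvalues_le_norm {M : Matrix ι ι ℝ} (hM : M.IsHermitian) (i : ι) :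
    hM.eigenvalues i ≤ ‖M‖ :=
  have : Nonempty ι := ⟨i⟩
  (le_abs_self _).trans (spectrum.norm_le_norm_of_mem (hM.eigenvalues_mem_spectrum_real i))

end Hermitian

section Submatrix
variable {𝕜 : Type*} [RCLike 𝕜] {l m n o : Type*} [Fintype l] [Fintype m] [Fintype n]
  [Fintype o] [DecidableEq l] [DecidableEq m] [DecidableEq n] [DecidableEq o]

lemma Matrix.l2_opNorm_one_le : ‖(1 : Matrix n n 𝕜)‖ ≤ 1 := by
  rw [cstar_norm_def, map_one]
  exact ContinuousLinearMap.norm_id_le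

lemma Matrix.l2_opNorm_one_submatrix_id_le {e : l → m} (he : Function.Injective e) :
    ‖(1 : Matrix m m 𝕜).submatrix id e‖ ≤ 1 := by
  set P := (1 : Matrix m m 𝕜).submatrix id e
  have hP : Pᴴ * P = 1 := by
    rw [conjTranspose_submatrix, conjTranspose_one, ← submatrix_one e he]
    ext
    simp [P, mul_apply, one_apply]
  have := l2_opNorm_conjTranspose_mul_self P
  rw [hP] at this
  nlinarith [norm_nonneg P, l2_opNorm_one_le (𝕜 := 𝕜) (n := l)]

lemma Matrix.l2_opNorm_submatrix_le (M : Matrix m n 𝕜) {e₁ : l → m} {e₂ : o → n}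
    (he₁ : Function.Injective e₁) (he₂ : Function.Injective e₂) :
    ‖M.submatrix e₁ e₂‖ ≤ ‖M‖ := by
  have hfac : M.submatrix e₁ e₂ =
      ((1 : Matrix m m 𝕜).submatrix id e₁)ᴴ * M * (1 : Matrix n n 𝕜).submatrix id e₂ := by
    rw [conjTranspose_submatrix, conjTranspose_one]
    ext
    simp [mul_apply, one_apply]
  rw [hfac]
  calc _ ≤ ‖((1 : Matrix m m 𝕜).submatrix id e₁)ᴴ‖ * ‖M‖ *
          ‖(1 : Matrix n n 𝕜).submatrix id e₂‖ :=
        (l2_opNorm_mul _ _).trans (mul_le_mul_of_nonneg_right (l2_opNorm_mul _ _) (norm_nonneg _))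
    _ ≤ 1 * ‖M‖ * 1 := by
        rw [l2_opNorm_conjTranspose]
        gcongr
        exacts [l2_opNorm_one_submatrix_id_le he₁, l2_opNorm_one_submatrix_id_le he₂]
    _ = ‖M‖ := by ring

end Submatrix

lemma Matrix.submatrix_diagonal_mul_mul_diagonal {α : Type*} [NonUnitalNonAssocSemiring α]
    {l m n o : Type*} [Fintype l] [Fintype m] [Fintype n] [Fintype o] [DecidableEq l]
    [DecidableEq m] [DecidableEq n] [DecidableEq o] (d₁ : m → α) (M : Matrix m n α) (d₂ : n → α)
    (e₁ : l → m) (e₂ : o → n) :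
    (diagonal d₁ * M * diagonal d₂).submatrix e₁ e₂ =
      diagonal (d₁ ∘ e₁) * M.submatrix e₁ e₂ * diagonal (d₂ ∘ e₂) := by
  ext
  simp [mul_diagonal, diagonal_mul]

lemma Matrix.det_submatrix_diagonal_nonneg {ι κ : Type*} [DecidableEq ι] [Fintype κ]
    [DecidableEq κ] {lam : ι → ℝ} (hlam : ∀ i, 0 ≤ lam i) {e : κ → ι}
    (he : Function.Injective e) : 0 ≤ ((diagonal lam).submatrix e e).det := by
  rw [submatrix_diagonal _ e he, det_diagonal]
  exact Finset.prod_nonneg fun i _ => hlam (e i)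

lemma Matrix.transpose_submatrix_self_of_transpose_eq_neg {α ι κ : Type*} [Neg α]
    {A : Matrix ι ι α} (hA : Aᵀ = -A) (e : κ → ι) :
    (A.submatrix e e)ᵀ = -A.submatrix e e := by
  rw [transpose_submatrix, hA]
  rfl

section Skew
variable {ι : Type*} [Fintype ι] [DecidableEq ι]

lemma Matrix.det_eq_zero_of_transpose_eq_neg_of_odd {A : Matrix ι ι ℝ} (hA : Aᵀ = -A)
    (hodd : Odd (Fintype.card ι)) : A.det = 0 := by
  have h := congrArg det hA
  rw [det_transpose, det_neg, hodd.neg_one_pow] at h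
  linarith

lemma Matrix.det_one_add_sq_of_transpose_eq_neg {A : Matrix ι ι ℝ} (hA : Aᵀ = -A) :
    (1 + A).det ^ 2 = (1 + Aᵀ * A).det := by
  have : (1 + A) * (1 + A)ᵀ = 1 + Aᵀ * A := by
    rw [transpose_add, transpose_one, hA]
    noncomm_ring
  rw [sq, ← this, det_mul, det_transpose]

lemma Matrix.one_le_det_one_add_transpose_mul_self (A : Matrix ι ι ℝ) :
    1 ≤ (1 + Aᵀ * A).det := by
  have hpsd : (Aᵀ * A).PosSemidef := by
    simpa using posSemidef_conjTranspose_mul_self A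
  rw [hpsd.1.det_one_add]
  exact Finset.one_le_prod fun i _ => le_add_of_nonneg_right (hpsd.eigenvalues_nonneg i)

lemma Matrix.det_one_add_transpose_mul_self_le_of_transpose_eq_neg {A : Matrix ι ι ℝ}
    (hA : Aᵀ = -A) : (1 + Aᵀ * A).det ≤ (1 + ‖A‖ ^ 2) ^ (2 * (Fintype.card ι / 2)) := by
  have hpsd : (Aᵀ * A).PosSemidef := by simpa using posSemidef_conjTranspose_mul_self A
  have hnorm : ‖Aᵀ * A‖ = ‖A‖ ^ 2 := by
    rw [sq, ← l2_opNorm_conjTranspose_mul_self, conjTranspose_eq_transpose_of_trivial]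
  have hμ0 : ∀ i, 0 ≤ 1 + hpsd.1.eigenvalues i := fun i => by
    linarith [hpsd.eigenvalues_nonneg i]
  have hμ : ∀ i, 1 + hpsd.1.eigenvalues i ≤ 1 + ‖A‖ ^ 2 := fun i => by
    linarith [hnorm ▸ hpsd.1.eigenvalues_le_norm i]
  rw [hpsd.1.det_one_add]
  rcases Nat.even_or_odd (Fintype.card ι) with heven | hodd
  · rw [Nat.two_mul_div_two_of_even heven, ← Finset.card_univ, ← Finset.prod_const]
    exact Finset.prod_le_prod (fun i _ => hμ0 i) (fun i _ => hμ i)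
  · -- `A` is singular, so `Aᵀ A` has a zero eigenvalue.
    obtain ⟨j, -, hj⟩ : ∃ j ∈ Finset.univ, hpsd.1.eigenvalues j = 0 := by
      have := hpsd.1.det_eq_prod_eigenvalues
      rw [det_mul, det_eq_zero_of_transpose_eq_neg_of_odd hA hodd, mul_zero] at this
      exact Finset.prod_eq_zero_iff.1 (by exact_mod_cast this.symm)
    rw [← Finset.mul_prod_erase _ _ (Finset.mem_univ j), hj, add_zero, one_mul,
      Nat.two_mul_odd_div_two (Nat.odd_iff.1 hodd), ← Finset.card_univ,
      ← Finset.card_erase_of_mem (Finset.mem_univ j), ← Finset.prod_const]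
    exact Finset.prod_le_prod (fun i _ => hμ0 i) (fun i _ => hμ i)

lemma Matrix.det_one_add_le_of_transpose_eq_neg {A : Matrix ι ι ℝ} (hA : Aᵀ = -A) :
    (1 + A).det ≤ (1 + ‖A‖ ^ 2) ^ (Fintype.card ι / 2) := by
  refine le_of_pow_le_pow_left₀ two_ne_zero (by positivity) ?_
  rw [det_one_add_sq_of_transpose_eq_neg hA, ← pow_mul']
  exact det_one_add_transpose_mul_self_le_of_transpose_eq_neg hA

lemma Matrix.one_le_det_one_add_sq_of_transpose_eq_neg {A : Matrix ι ι ℝ} (hA : Aᵀ = -A) :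
    1 ≤ (1 + A).det ^ 2 :=
  (det_one_add_sq_of_transpose_eq_neg hA).symm ▸ one_le_det_one_add_transpose_mul_self A

lemma Matrix.det_one_add_pos_of_transpose_eq_neg {A : Matrix ι ι ℝ} (hA : Aᵀ = -A) :
    0 < (1 + A).det := by
  -- Each `t • A` is skew, so `t ↦ det (1 + t • A)` has no zero and keeps the sign it has at `0`.
  have hne : ∀ t : ℝ, (1 + t • A).det ≠ 0 := fun t h => by
    have := one_le_det_one_add_sq_of_transpose_eq_neg (A := t • A)
      (by rw [transpose_smul, hA, smul_neg])
    rw [h] at this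
    norm_num at this
  by_contra! h
  obtain ⟨t, ht⟩ := intermediate_value_univ (1 : ℝ) 0 (f := fun t : ℝ => (1 + t • A).det)
    (by fun_prop) ⟨by simpa using h, by simp⟩
  exact hne t ht

lemma Matrix.one_le_det_one_add_of_transpose_eq_neg {A : Matrix ι ι ℝ} (hA : Aᵀ = -A) :
    1 ≤ (1 + A).det :=
  (one_le_sq_iff₀ (det_one_add_pos_of_transpose_eq_neg hA).le).1
    (one_le_det_one_add_sq_of_transpose_eq_neg hA)

end Skew

section Congruence
variable {ι κ : Type*} [Fintype ι] [DecidableEq ι] [Fintype κ] [DecidableEq κ]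
  {lam : ι → ℝ} {β : Matrix ι ι ℝ}

/-- The matrix `D^{-1/2} β D^{-1/2}` for `D = diagonal lam`. -/
noncomputable def Matrix.diagInvSqrtConj (lam : ι → ℝ) (β : Matrix ι ι ℝ) : Matrix ι ι ℝ :=
  diagonal (fun i => 1 / √(lam i)) * β * diagonal (fun i => 1 / √(lam i))

lemma Matrix.transpose_diagInvSqrtConj (hβ : βᵀ = -β) :
    (diagInvSqrtConj lam β)ᵀ = -diagInvSqrtConj lam β := by
  rw [diagInvSqrtConj, transpose_mul, transpose_mul, diagonal_transpose, hβ, Matrix.neg_mul,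
    Matrix.mul_neg, Matrix.mul_assoc]

lemma Matrix.diagonal_add_eq_sqrt_mul_mul_sqrt (hpos : ∀ i, 0 < lam i) :
    diagonal lam + β = diagonal (fun i => √(lam i)) * (1 + diagInvSqrtConj lam β) *
      diagonal (fun i => √(lam i)) := by
  have hinv : diagonal (fun i => √(lam i)) * diagonal (fun i => 1 / √(lam i)) = 1 := by
    rw [diagonal_mul_diagonal, ← diagonal_one]
    exact congrArg diagonal (funext fun i => mul_one_div_cancel (Real.sqrt_pos.2 (hpos i)).ne')
  have hinv' : diagonal (fun i => 1 / √(lam i)) * diagonal (fun i => √(lam i)) = 1 := by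
    rw [← hinv, diagonal_mul_diagonal, diagonal_mul_diagonal, funext fun i => mul_comm _ _]
  have hsq : diagonal (fun i => √(lam i)) * diagonal (fun i => √(lam i)) = diagonal lam := by
    rw [diagonal_mul_diagonal]
    exact congrArg diagonal (funext fun i => Real.mul_self_sqrt (hpos i).le)
  simp only [diagInvSqrtConj, Matrix.mul_add, Matrix.add_mul, Matrix.mul_one, hsq,
    ← Matrix.mul_assoc, hinv]
  simp only [Matrix.mul_assoc, hinv', Matrix.one_mul, Matrix.mul_one]

lemma Matrix.det_submatrix_diagonal_add (hpos : ∀ i, 0 < lam i) {e : κ → ι}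
    (he : Function.Injective e) :
    ((diagonal lam + β).submatrix e e).det =
      ((diagonal lam).submatrix e e).det * (1 + (diagInvSqrtConj lam β).submatrix e e).det := by
  have hone : ∀ C : Matrix ι ι ℝ, (1 + C).submatrix e e = 1 + C.submatrix e e := fun C => by
    rw [← submatrix_one e he]
    rfl
  rw [diagonal_add_eq_sqrt_mul_mul_sqrt hpos, submatrix_diagonal_mul_mul_diagonal, hone, det_mul,
    det_mul, submatrix_diagonal _ e he, det_diagonal, det_diagonal, mul_right_comm,
    ← Finset.prod_mul_distrib]
  simp only [Function.comp_apply, Real.mul_self_sqrt (hpos _).le]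

lemma Matrix.det_submatrix_diagonal_le_det_submatrix_diagonal_add (hpos : ∀ i, 0 < lam i)
    (hβ : βᵀ = -β) {e : κ → ι} (he : Function.Injective e) :
    ((diagonal lam).submatrix e e).det ≤ ((diagonal lam + β).submatrix e e).det := by
  have hA :=
    transpose_submatrix_self_of_transpose_eq_neg (transpose_diagInvSqrtConj (lam := lam) hβ) e
  rw [det_submatrix_diagonal_add hpos he]
  exact le_mul_of_one_le_right (det_submatrix_diagonal_nonneg (fun i => (hpos i).le) he)
    (one_le_det_one_add_of_transpose_eq_neg hA)

lemma Matrix.det_submatrix_diagonal_add_le (hpos : ∀ i, 0 < lam i) (hβ : βᵀ = -β) {δ : ℝ}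
    (hδ : ‖diagInvSqrtConj lam β‖ ≤ δ) {e : κ → ι} (he : Function.Injective e) :
    ((diagonal lam + β).submatrix e e).det ≤
      (1 + δ ^ 2) ^ (Fintype.card κ / 2) * ((diagonal lam).submatrix e e).det := by
  have hA :=
    transpose_submatrix_self_of_transpose_eq_neg (transpose_diagInvSqrtConj (lam := lam) hβ) e
  rw [det_submatrix_diagonal_add hpos he, mul_comm]
  refine mul_le_mul_of_nonneg_right ?_ (det_submatrix_diagonal_nonneg (fun i => (hpos i).le) he)
  refine (det_one_add_le_of_transpose_eq_neg hA).trans ?_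
  gcongr
  exact (l2_opNorm_submatrix_le _ he he).trans hδ

end Congruence

theorem Sk_perturbation_bounds_general {n k : ℕ}
    (lam : Fin n → ℝ) (hpos : ∀ i, 0 < lam i)
    (β : Matrix (Fin n) (Fin n) ℝ) (hβ : βᵀ = -β)
    (δ : ℝ)
    (hnorm : opNorm (Matrix.diagonal (fun i => 1 / Real.sqrt (lam i)) * β *
      Matrix.diagonal (fun i => 1 / Real.sqrt (lam i))) ≤ δ) :
    Sk k (Matrix.diagonal lam) ≤ Sk k (Matrix.diagonal lam + β) ∧
      Sk k (Matrix.diagonal lam + β) ≤ (1 + δ ^ 2) ^ (k / 2) * Sk k (Matrix.diagonal lam) := by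
  have hδ : ‖diagInvSqrtConj lam β‖ ≤ δ := hnorm
  rw [Sk, Sk, Finset.mul_sum]
  constructor <;> refine Finset.sum_le_sum fun s _ => ?_
  · exact det_submatrix_diagonal_le_det_submatrix_diagonal_add hpos hβ
      (s.1.orderEmbOfFin s.2).injective
  · simpa using det_submatrix_diagonal_add_le hpos hβ hδ (s.1.orderEmbOfFin s.2).injective

/-- For R = D + β with D = diag(λ) positive, β skew-symmetric and
‖D^{-1/2} β D^{-1/2}‖ ≤ δ < 1, one has S_k(D) ≤ S_k(R) ≤ (1+δ²)^{⌊k/2⌋} S_k(D). -/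
theorem Sk_perturbation_bounds {n k : ℕ} (hk : 1 ≤ k) (hkn : k ≤ n)
    (lam : Fin n → ℝ) (hpos : ∀ i, 0 < lam i)
    (β : Matrix (Fin n) (Fin n) ℝ) (hβ : βᵀ = -β)
    (δ : ℝ) (hδ0 : 0 < δ) (hδ1 : δ < 1)
    (hnorm : opNorm (Matrix.diagonal (fun i => 1 / Real.sqrt (lam i)) * β *
      Matrix.diagonal (fun i => 1 / Real.sqrt (lam i))) ≤ δ) :
    Sk k (Matrix.diagonal lam) ≤ Sk k (Matrix.diagonal lam + β) ∧
      Sk k (Matrix.diagonal lam + β) ≤ (1 + δ ^ 2) ^ (k / 2) * Sk k (Matrix.diagonal lam) :=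
  Sk_perturbation_bounds_general lam hpos β hβ δ hnorm
end

section
/- Let R = D + β with D = diag(λ₁,…,λ_n), λ_i > 0, β skew-symmetric, and σ = D^{-1/2} β D^{-1/2} with ‖σ‖ ≤ δ < 1. For each k-subset of indices i₁<⋯<i_k, the principal submatrix R_{i₁…i_k} is invertible and the symmetric part of its inverse satisfies ((R_{i₁…i_k})^{-1} + [(R_{i₁…i_k})^{-1}]ᵀ)/2 = D_{i₁…i_k}^{-1/2}(E - σ_{i₁…i_k}²)^{-1} D_{i₁…i_k}^{-1/2}, where σ_{i₁…i_k} = D_{i₁…i_k}^{-1/2} β_{i₁…i_k} D_{i₁…i_k}^{-1/2}. -/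
open Matrix

theorem aux_main {n k : ℕ} (lam : Fin n → ℝ) (hpos : ∀ i, 0 < lam i)
    (β : Matrix (Fin n) (Fin n) ℝ) (hβ : βᵀ = -β)
    (e : Fin k → Fin n) (he : Function.Injective e) :
    IsUnit ((Matrix.diagonal lam + β).submatrix e e) ∧
    ((2 : ℝ)⁻¹) • (((Matrix.diagonal lam + β).submatrix e e)⁻¹ +
        (((Matrix.diagonal lam + β).submatrix e e)⁻¹)ᵀ) =
      (Matrix.diagonal fun p => 1 / Real.sqrt (lam (e p))) *
        (1 - ((Matrix.diagonal fun p => 1 / Real.sqrt (lam (e p))) * β.submatrix e e *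
            (Matrix.diagonal fun p => 1 / Real.sqrt (lam (e p)))) *
          ((Matrix.diagonal fun p => 1 / Real.sqrt (lam (e p))) * β.submatrix e e *
            (Matrix.diagonal fun p => 1 / Real.sqrt (lam (e p)))))⁻¹ *
        (Matrix.diagonal fun p => 1 / Real.sqrt (lam (e p))) := by
  set s : Fin k → ℝ := fun p => Real.sqrt (lam (e p)) with hs
  have hspos : ∀ p, 0 < s p := fun p => Real.sqrt_pos.2 (hpos (e p))
  have hsne : ∀ p, s p ≠ 0 := fun p => (hspos p).ne'
  set Dh : Matrix (Fin k) (Fin k) ℝ := Matrix.diagonal (fun p => 1 / s p) with hDh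
  set Dm : Matrix (Fin k) (Fin k) ℝ := Matrix.diagonal s with hDm
  set σ : Matrix (Fin k) (Fin k) ℝ := Dh * β.submatrix e e * Dh with hσ
  have hf1 : (fun p => s p * (1 / s p)) = fun _ : Fin k => (1 : ℝ) :=
    funext fun p => by rw [mul_one_div, div_self (hsne p)]
  have hf2 : (fun p => (1 / s p) * s p) = fun _ : Fin k => (1 : ℝ) :=
    funext fun p => one_div_mul_cancel (hsne p)
  have hDmDh : Dm * Dh = 1 := by
    rw [hDm, hDh, Matrix.diagonal_mul_diagonal, hf1, Matrix.diagonal_one]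
  have hDhDm : Dh * Dm = 1 := by
    rw [hDm, hDh, Matrix.diagonal_mul_diagonal, hf2, Matrix.diagonal_one]
  have hDhT : Dhᵀ = Dh := Matrix.diagonal_transpose _
  have hβsubT : (β.submatrix e e)ᵀ = -(β.submatrix e e) := by
    rw [Matrix.transpose_submatrix, hβ]; rfl
  have hσT : σᵀ = -σ := by
    rw [hσ, Matrix.transpose_mul, Matrix.transpose_mul, hDhT, hβsubT]
    simp [Matrix.mul_assoc]
  have hf3 : (fun p => s p * s p) = lam ∘ e := funext fun p => by
    simp [hs, Real.mul_self_sqrt (hpos (e p)).le]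
  have hDmDm : Dm * Dm = (Matrix.diagonal lam).submatrix e e := by
    rw [hDm, Matrix.diagonal_mul_diagonal, Matrix.submatrix_diagonal lam e he, hf3]
  have hR : (Matrix.diagonal lam + β).submatrix e e = Dm * (1 + σ) * Dm := by
    rw [show (Matrix.diagonal lam + β).submatrix e e =
        (Matrix.diagonal lam).submatrix e e + β.submatrix e e from rfl]
    rw [mul_add, add_mul, mul_one, hDmDm, hσ]
    congr 1
    symm
    calc Dm * (Dh * β.submatrix e e * Dh) * Dm
        = (Dm * Dh) * β.submatrix e e * (Dh * Dm) := by
          simp only [Matrix.mul_assoc]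
      _ = β.submatrix e e := by rw [hDmDh, hDhDm, one_mul, mul_one]
  set A : Matrix (Fin k) (Fin k) ℝ := 1 + σ with hA
  set B : Matrix (Fin k) (Fin k) ℝ := 1 - σ with hB
  set C : Matrix (Fin k) (Fin k) ℝ := 1 - σ * σ with hC
  have hBA : B * A = C := by rw [hA, hB, hC]; noncomm_ring
  have hAB : A * B = C := by rw [hA, hB, hC]; noncomm_ring
  have hCpos : C.PosDef := by
    have h1 : C = 1 + σᴴ * σ := by
      rw [Matrix.conjTranspose_eq_transpose_of_trivial, hσT, hC]
      noncomm_ring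
    rw [h1]
    exact Matrix.PosDef.add_posSemidef Matrix.PosDef.one
      (Matrix.posSemidef_conjTranspose_mul_self σ)
  have hCunit : IsUnit C := hCpos.isUnit
  have hCdet : IsUnit C.det := (Matrix.isUnit_iff_isUnit_det C).1 hCunit
  have hAdet : IsUnit A.det := by
    have h : A.det * B.det = C.det := by rw [← Matrix.det_mul, hAB]
    exact isUnit_of_mul_isUnit_left (h ▸ hCdet)
  have hBdet : IsUnit B.det := by
    have h : B.det * A.det = C.det := by rw [← Matrix.det_mul, hBA]
    exact isUnit_of_mul_isUnit_left (h ▸ hCdet)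
  have hDmUnit : IsUnit Dm := ⟨⟨Dm, Dh, hDmDh, hDhDm⟩, rfl⟩
  have hRunit : IsUnit ((Matrix.diagonal lam + β).submatrix e e) := by
    rw [hR]
    exact (hDmUnit.mul ((Matrix.isUnit_iff_isUnit_det A).2 hAdet)).mul hDmUnit
  refine ⟨hRunit, ?_⟩
  have hRinv : ((Matrix.diagonal lam + β).submatrix e e)⁻¹ = Dh * A⁻¹ * Dh := by
    apply Matrix.inv_eq_right_inv
    rw [hR]
    calc Dm * A * Dm * (Dh * A⁻¹ * Dh)
        = Dm * (A * ((Dm * Dh) * (A⁻¹ * Dh))) := by simp only [Matrix.mul_assoc]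
      _ = Dm * (A * A⁻¹ * Dh) := by rw [hDmDh, one_mul, Matrix.mul_assoc]
      _ = Dm * Dh := by rw [Matrix.mul_nonsing_inv A hAdet, one_mul]
      _ = 1 := hDmDh
  have hAT : Aᵀ = B := by rw [hA, hB, Matrix.transpose_add, hσT]; simp [sub_eq_add_neg]
  have hRinvT : (((Matrix.diagonal lam + β).submatrix e e)⁻¹)ᵀ = Dh * B⁻¹ * Dh := by
    rw [hRinv, Matrix.transpose_mul, Matrix.transpose_mul, hDhT,
      Matrix.transpose_nonsing_inv, hAT, Matrix.mul_assoc]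
  have e1 : C * A⁻¹ = B := by
    rw [← hBA, Matrix.mul_assoc, Matrix.mul_nonsing_inv A hAdet, mul_one]
  have e2 : C * B⁻¹ = A := by
    rw [← hAB, Matrix.mul_assoc, Matrix.mul_nonsing_inv B hBdet, mul_one]
  have h2 : C * (A⁻¹ + B⁻¹) = (2 : ℝ) • (1 : Matrix (Fin k) (Fin k) ℝ) := by
    rw [mul_add, e1, e2, hA, hB, two_smul]
    abel
  have hsum : A⁻¹ + B⁻¹ = (2 : ℝ) • C⁻¹ := by
    calc A⁻¹ + B⁻¹ = C⁻¹ * (C * (A⁻¹ + B⁻¹)) := by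
          rw [← Matrix.mul_assoc, Matrix.nonsing_inv_mul C hCdet, one_mul]
      _ = C⁻¹ * ((2 : ℝ) • 1) := by rw [h2]
      _ = (2 : ℝ) • C⁻¹ := by rw [Matrix.mul_smul, mul_one]
  rw [hRinvT, hRinv]
  calc (2 : ℝ)⁻¹ • (Dh * A⁻¹ * Dh + Dh * B⁻¹ * Dh)
      = (2 : ℝ)⁻¹ • (Dh * (A⁻¹ + B⁻¹) * Dh) := by rw [mul_add, add_mul]
    _ = (2 : ℝ)⁻¹ • ((2 : ℝ) • (Dh * C⁻¹ * Dh)) := by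
        rw [hsum, Matrix.mul_smul, Matrix.smul_mul]
    _ = Dh * C⁻¹ * Dh := by
        rw [smul_smul, inv_mul_cancel₀ two_ne_zero, one_smul]

/-- Symmetric part of the inverse of a principal submatrix of R = D + β. -/
theorem symm_part_inv_principal_submatrix {n k : ℕ}
    (lam : Fin n → ℝ) (hpos : ∀ i, 0 < lam i)
    (β : Matrix (Fin n) (Fin n) ℝ) (hβ : βᵀ = -β)
    (δ : ℝ) (hδ1 : δ < 1)
    (hnorm : opNorm (Matrix.diagonal (fun i => 1 / Real.sqrt (lam i)) * β *
      Matrix.diagonal (fun i => 1 / Real.sqrt (lam i))) ≤ δ)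
    (e : Fin k → Fin n) (he : StrictMono e) :
    letI Rsub := (Matrix.diagonal lam + β).submatrix e e
    letI Dhalf : Matrix (Fin k) (Fin k) ℝ :=
      Matrix.diagonal fun p => 1 / Real.sqrt (lam (e p))
    letI σs := Dhalf * (β.submatrix e e) * Dhalf
    IsUnit Rsub ∧
      ((2 : ℝ)⁻¹) • (Rsub⁻¹ + (Rsub⁻¹)ᵀ) = Dhalf * (1 - σs * σs)⁻¹ * Dhalf := by
  exact aux_main lam hpos β hβ e he.injective
end

section
/- Under the hypotheses of the previous setting (R = D + β, D diagonal positive, β skew-symmetric, ‖σ_{i₁…i_k}‖ ≤ δ < 1 for all k-subsets), the skew-symmetric part of the inverse of each principal submatrix satisfies ((R_{i₁…i_k})^{-1} - [(R_{i₁…i_k})^{-1}]ᵀ)/2 = D_{i₁…i_k}^{-1/2}(-σ_{i₁…i_k})(E - σ_{i₁…i_k}²)^{-1} D_{i₁…i_k}^{-1/2}. -/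
open Matrix

/-- Skew-symmetric part of the inverse of a principal submatrix of R = D + β. -/
theorem skew_part_inv_principal_submatrix {n k : ℕ}
    (lam : Fin n → ℝ) (hpos : ∀ i, 0 < lam i)
    (β : Matrix (Fin n) (Fin n) ℝ) (hβ : βᵀ = -β)
    (δ : ℝ) (hδ1 : δ < 1)
    (hnorm : ∀ (e : Fin k → Fin n), StrictMono e →
      opNorm ((Matrix.diagonal fun p => 1 / Real.sqrt (lam (e p))) * (β.submatrix e e) *
        (Matrix.diagonal fun p => 1 / Real.sqrt (lam (e p)))) ≤ δ)
    (e : Fin k → Fin n) (he : StrictMono e) :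
    letI Rsub := (Matrix.diagonal lam + β).submatrix e e
    letI Dhalf : Matrix (Fin k) (Fin k) ℝ :=
      Matrix.diagonal fun p => 1 / Real.sqrt (lam (e p))
    letI σs := Dhalf * (β.submatrix e e) * Dhalf
    ((2 : ℝ)⁻¹) • (Rsub⁻¹ - (Rsub⁻¹)ᵀ) = Dhalf * (-σs) * (1 - σs * σs)⁻¹ * Dhalf := by
  set Dhalf : Matrix (Fin k) (Fin k) ℝ :=
    Matrix.diagonal fun p => 1 / Real.sqrt (lam (e p)) with hDhalf
  set B := β.submatrix e e with hB
  set σs := Dhalf * B * Dhalf with hσ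
  set Rsub := (Matrix.diagonal lam + β).submatrix e e with hRsubdef
  set Dinv : Matrix (Fin k) (Fin k) ℝ :=
    Matrix.diagonal fun p => Real.sqrt (lam (e p)) with hDinv
  have hsqrt : ∀ p : Fin k, Real.sqrt (lam (e p)) ≠ 0 :=
    fun p => (Real.sqrt_pos.mpr (hpos (e p))).ne'
  have hDD : Dhalf * Dinv = 1 := by
    rw [hDhalf, hDinv, Matrix.diagonal_mul_diagonal,
      show (fun i => 1 / Real.sqrt (lam (e i)) * Real.sqrt (lam (e i))) = fun _ => (1 : ℝ)
        from funext fun p => by rw [div_mul_eq_mul_div, one_mul, div_self (hsqrt p)]]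
    exact Matrix.diagonal_one
  have hDD' : Dinv * Dhalf = 1 := by
    rw [hDhalf, hDinv, Matrix.diagonal_mul_diagonal,
      show (fun i => Real.sqrt (lam (e i)) * (1 / Real.sqrt (lam (e i)))) = fun _ => (1 : ℝ)
        from funext fun p => by rw [mul_one_div, div_self (hsqrt p)]]
    exact Matrix.diagonal_one
  have hBskew : Bᵀ = -B := by
    rw [hB, Matrix.transpose_submatrix, hβ]
    rfl
  have hσskew : σsᵀ = -σs := by
    show (Dhalf * B * Dhalf)ᵀ = -(Dhalf * B * Dhalf)
    rw [Matrix.transpose_mul, Matrix.transpose_mul, hDhalf, Matrix.diagonal_transpose,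
      ← hDhalf, hBskew]
    noncomm_ring
  have hpos2 : (1 - σs * σs).PosDef := by
    have h1 : (1 : Matrix (Fin k) (Fin k) ℝ) - σs * σs = σs * σsᴴ + 1 := by
      rw [Matrix.conjTranspose_eq_transpose_of_trivial, hσskew]
      noncomm_ring
    rw [h1]
    exact Matrix.PosDef.posSemidef_add (Matrix.posSemidef_self_mul_conjTranspose σs)
      Matrix.PosDef.one
  have hU2 : IsUnit (1 - σs * σs).det := (Matrix.isUnit_iff_isUnit_det _).mp hpos2.isUnit
  have hfac : (1 + σs) * (1 - σs) = 1 - σs * σs := by noncomm_ring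
  have hfac' : (1 - σs) * (1 + σs) = 1 - σs * σs := by noncomm_ring
  have hUp : IsUnit (1 + σs).det := by
    have h := hU2
    rw [← hfac, Matrix.det_mul] at h
    exact isUnit_of_mul_isUnit_left h
  have hUm : IsUnit (1 - σs).det := by
    have h := hU2
    rw [← hfac, Matrix.det_mul] at h
    exact isUnit_of_mul_isUnit_right h
  have hR : Rsub = Dinv * (1 + σs) * Dinv := by
    have hR0 : Rsub = Matrix.diagonal (lam ∘ e) + B := by
      rw [hRsubdef, hB]
      ext i j
      simp [Matrix.submatrix_apply, Matrix.add_apply, Matrix.diagonal_apply,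
        he.injective.eq_iff, Function.comp]
    rw [hR0]
    have hdiag : Matrix.diagonal (lam ∘ e) = Dinv * Dinv := by
      rw [hDinv, Matrix.diagonal_mul_diagonal,
        show (fun i => Real.sqrt (lam (e i)) * Real.sqrt (lam (e i))) = lam ∘ e
          from funext fun p => Real.mul_self_sqrt (hpos (e p)).le]
    have h2 : Dinv * (1 + σs) * Dinv = Dinv * Dinv + Dinv * (Dhalf * B * Dhalf) * Dinv := by
      rw [hσ]; noncomm_ring
    have h4 : Dinv * (Dhalf * B * Dhalf) * Dinv = (Dinv * Dhalf) * B * (Dhalf * Dinv) := by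
      simp only [Matrix.mul_assoc]
    rw [h2, h4, hDD', hDD, Matrix.one_mul, Matrix.mul_one, hdiag]
  have hRinv : Rsub⁻¹ = Dhalf * (1 + σs)⁻¹ * Dhalf := by
    apply Matrix.inv_eq_right_inv
    rw [hR]
    have h3 : Dinv * (1 + σs) * Dinv * (Dhalf * (1 + σs)⁻¹ * Dhalf)
        = Dinv * ((1 + σs) * ((Dinv * Dhalf) * ((1 + σs)⁻¹ * Dhalf))) := by
      simp only [Matrix.mul_assoc]
    rw [h3, hDD', Matrix.one_mul, ← Matrix.mul_assoc (1 + σs) (1 + σs)⁻¹ Dhalf,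
      Matrix.mul_nonsing_inv _ hUp, Matrix.one_mul, hDD']
  have hRinvT : (Rsub⁻¹)ᵀ = Dhalf * (1 - σs)⁻¹ * Dhalf := by
    rw [hRinv]
    have h1 : ((1 + σs)⁻¹)ᵀ = (1 - σs)⁻¹ := by
      rw [Matrix.transpose_nonsing_inv, Matrix.transpose_add, Matrix.transpose_one, hσskew,
        ← sub_eq_add_neg]
    calc (Dhalf * (1 + σs)⁻¹ * Dhalf)ᵀ
        = Dhalfᵀ * ((1 + σs)⁻¹)ᵀ * Dhalfᵀ := by
          rw [Matrix.transpose_mul, Matrix.transpose_mul, Matrix.mul_assoc]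
      _ = Dhalf * (1 - σs)⁻¹ * Dhalf := by
          rw [h1, hDhalf, Matrix.diagonal_transpose]
  have hkey : (1 + σs)⁻¹ - (1 - σs)⁻¹ = (-(2 : ℝ)) • (σs * (1 - σs * σs)⁻¹) := by
    have e1 : (1 + σs)⁻¹ * (1 - σs * σs) = 1 - σs := by
      rw [← hfac, ← Matrix.mul_assoc, Matrix.nonsing_inv_mul _ hUp, Matrix.one_mul]
    have e2 : (1 - σs)⁻¹ * (1 - σs * σs) = 1 + σs := by
      rw [← hfac', ← Matrix.mul_assoc, Matrix.nonsing_inv_mul _ hUm, Matrix.one_mul]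
    have hmul : ((1 + σs)⁻¹ - (1 - σs)⁻¹) * (1 - σs * σs) = (-(2 : ℝ)) • σs := by
      rw [Matrix.sub_mul, e1, e2]
      ext i j
      simp [Matrix.sub_apply, Matrix.add_apply, Matrix.smul_apply, Matrix.one_apply]
      ring
    calc (1 + σs)⁻¹ - (1 - σs)⁻¹
        = ((1 + σs)⁻¹ - (1 - σs)⁻¹) * ((1 - σs * σs) * (1 - σs * σs)⁻¹) := by
          rw [Matrix.mul_nonsing_inv _ hU2, Matrix.mul_one]
      _ = (((1 + σs)⁻¹ - (1 - σs)⁻¹) * (1 - σs * σs)) * (1 - σs * σs)⁻¹ := by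
          rw [Matrix.mul_assoc ((1 + σs)⁻¹ - (1 - σs)⁻¹) (1 - σs * σs) (1 - σs * σs)⁻¹]
      _ = (-(2 : ℝ)) • (σs * (1 - σs * σs)⁻¹) := by
          rw [hmul, Matrix.smul_mul]
  rw [hRinvT, hRinv]
  have hcomb : Dhalf * (1 + σs)⁻¹ * Dhalf - Dhalf * (1 - σs)⁻¹ * Dhalf
      = Dhalf * ((1 + σs)⁻¹ - (1 - σs)⁻¹) * Dhalf := by noncomm_ring
  rw [hcomb, hkey, Matrix.mul_smul, Matrix.smul_mul, smul_smul]
  norm_num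
  simp only [Matrix.mul_neg, Matrix.neg_mul, Matrix.mul_assoc, neg_smul, one_smul]
end

section
/- Suppose u ∈ C²(Ω̄) satisfies S_k(D²u(x) - A(x) - B(x)) = f(x) in Ω̄, where A(x) is symmetric, B(x) is skew-symmetric with operator norm ‖B(x)‖ ≤ δ λ_min(ω(x)) for ω(x) = D²u(x) - A(x), 0 < δ < 1, ω(x) positive definite, and 0 < f₀ ≤ f(x) ≤ f₁. Then for every x ∈ Ω̄: λ_min(ω(x)) ≤ (f₁/C(n,k))^{1/k} and λ_max(ω(x)) ≥ ((1+δ²)^{-⌊k/2⌋} f₀ / C(n,k))^{1/k}. -/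
open Matrix

/-- Smallest eigenvalue of a (Hermitian) real matrix. -/
noncomputable def lamMin {n : ℕ} (M : Matrix (Fin n) (Fin n) ℝ) : ℝ :=
  if h : M.IsHermitian then ⨅ i, h.eigenvalues i else 0

/-- Largest eigenvalue of a (Hermitian) real matrix. -/
noncomputable def lamMax {n : ℕ} (M : Matrix (Fin n) (Fin n) ℝ) : ℝ :=
  if h : M.IsHermitian then ⨆ i, h.eigenvalues i else 0

/-!
Every principal `k × k` minor of `ω` lies between `λ_min ^ k` and `λ_max ^ k`, since restricting
to coordinates preserves the Loewner bounds `λ_min ≤ ω ≤ λ_max`; so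
`C(n,k) λ_min ^ k ≤ S_k(ω) ≤ C(n,k) λ_max ^ k`. For a principal block `W` of `ω` and the
corresponding skew block `B`, write `W - B = S (1 - N) S` with `S = √W` and `N = S⁻¹ B S⁻¹`.
Then `N` is skew with `Nᵀ N ≤ δ²`, `det (1 - N) > 0` and `det (1 - N) ^ 2 = det (1 + Nᵀ N)`,
which lies between `1` and `(1 + δ²) ^ (2 ⌊k/2⌋)` because in odd dimension `N` is singular.
Summing over the minors, `S_k(ω) ≤ f ≤ (1 + δ²) ^ ⌊k/2⌋ S_k(ω)`; take `k`-th roots.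
-/

open scoped MatrixOrder

namespace Matrix

variable {ι κ : Type*} [Fintype ι] [Fintype κ]

section Spectral

variable [DecidableEq ι] {M : Matrix ι ι ℝ} {c : ℝ}

lemma IsHermitian.algebraMap_le_iff (hM : M.IsHermitian) :
    algebraMap ℝ _ c ≤ M ↔ ∀ i, c ≤ hM.eigenvalues i := by
  rw [algebraMap_le_iff_le_spectrum hM.isSelfAdjoint, hM.spectrum_real_eq_range_eigenvalues]
  simp

lemma IsHermitian.le_algebraMap_iff (hM : M.IsHermitian) :
    M ≤ algebraMap ℝ _ c ↔ ∀ i, hM.eigenvalues i ≤ c := by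
  rw [le_algebraMap_iff_spectrum_le hM.isSelfAdjoint, hM.spectrum_real_eq_range_eigenvalues]
  simp

lemma posSemidef_of_algebraMap_le (hc : 0 ≤ c) (h : algebraMap ℝ _ c ≤ M) : M.PosSemidef :=
  nonneg_iff_posSemidef.1 ((algebraMap_nonneg _ hc).trans h)

lemma pow_card_le_det (hM : M.IsHermitian) (hc : 0 ≤ c) (h : algebraMap ℝ _ c ≤ M) :
    c ^ Fintype.card ι ≤ M.det := by
  have hle := hM.algebraMap_le_iff.1 h
  rw [hM.det_eq_prod_eigenvalues, ← Finset.card_univ, ← Finset.prod_const]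
  exact Finset.prod_le_prod (fun _ _ ↦ hc) fun i _ ↦ by simpa using hle i

lemma det_le_pow_card (hM : M.PosSemidef) (h : M ≤ algebraMap ℝ _ c) :
    M.det ≤ c ^ Fintype.card ι := by
  have hle := hM.isHermitian.le_algebraMap_iff.1 h
  rw [hM.isHermitian.det_eq_prod_eigenvalues, ← Finset.card_univ, ← Finset.prod_const]
  exact Finset.prod_le_prod (fun i _ ↦ by simpa using hM.eigenvalues_nonneg i)
    fun i _ ↦ by simpa using hle i

lemma det_le_pow_card_sub_one (hM : M.PosSemidef) (h : M ≤ algebraMap ℝ _ c)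
    (h1 : (1 : ℝ) ∈ spectrum ℝ M) : M.det ≤ c ^ (Fintype.card ι - 1) := by
  have hle := hM.isHermitian.le_algebraMap_iff.1 h
  obtain ⟨j, hj⟩ := hM.isHermitian.spectrum_real_eq_range_eigenvalues ▸ h1
  rw [hM.isHermitian.det_eq_prod_eigenvalues, ← Finset.mul_prod_erase _ _ (Finset.mem_univ j),
    ← Finset.card_univ, ← Finset.card_erase_of_mem (Finset.mem_univ j), ← Finset.prod_const]
  simp only [RCLike.ofReal_real_eq_id, id_eq, hj, one_mul]
  exact Finset.prod_le_prod (fun i _ ↦ hM.eigenvalues_nonneg i) fun i _ ↦ hle i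

lemma one_mem_spectrum_one_add {G : Matrix ι ι ℝ} (hG : G.det = 0) :
    (1 : ℝ) ∈ spectrum ℝ (1 + G) := by
  rw [spectrum.mem_iff, map_one, sub_add_cancel_left, isUnit_iff_isUnit_det, det_neg, hG]
  simp

end Spectral

section Compression

lemma transpose_mul_mul_le_transpose_mul_mul {A B : Matrix ι ι ℝ} (h : A ≤ B)
    (E : Matrix ι κ ℝ) : Eᵀ * A * E ≤ Eᵀ * B * E := by
  rw [le_iff] at h ⊢
  simpa [Matrix.mul_sub, Matrix.sub_mul] using h.conjTranspose_mul_mul_same E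

variable [DecidableEq ι] [DecidableEq κ] {M : Matrix ι ι ℝ} {c : ℝ} {e : κ → ι}

lemma submatrix_algebraMap (he : e.Injective) :
    (algebraMap ℝ (Matrix ι ι ℝ) c).submatrix e e = algebraMap ℝ _ c := by
  simp [algebraMap_eq_diagonal, submatrix_diagonal _ _ he]

lemma algebraMap_le_submatrix (he : e.Injective) (h : algebraMap ℝ _ c ≤ M) :
    algebraMap ℝ _ c ≤ M.submatrix e e := by
  rw [le_iff] at h ⊢
  simpa only [submatrix_sub, Pi.sub_apply, submatrix_algebraMap he] using h.submatrix e

lemma submatrix_le_algebraMap (he : e.Injective) (h : M ≤ algebraMap ℝ _ c) :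
    M.submatrix e e ≤ algebraMap ℝ _ c := by
  rw [le_iff] at h ⊢
  simpa only [submatrix_sub, Pi.sub_apply, submatrix_algebraMap he] using h.submatrix e

lemma mul_transpose_le_one {E : Matrix ι κ ℝ} (hE : Eᵀ * E = 1) : E * Eᵀ ≤ 1 := by
  have hP : (1 - E * Eᵀ)ᵀ * (1 - E * Eᵀ) = 1 - E * Eᵀ := by
    simp only [transpose_sub, transpose_one, transpose_mul, transpose_transpose,
      Matrix.sub_mul, Matrix.mul_sub, Matrix.one_mul, Matrix.mul_one, Matrix.mul_assoc,
      ← Matrix.mul_assoc Eᵀ, hE]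
    abel
  have h := posSemidef_conjTranspose_mul_self (1 - E * Eᵀ)
  rwa [conjTranspose_eq_transpose_of_trivial, hP, ← le_iff] at h

lemma transpose_mul_self_submatrix_le (he : e.Injective) (B : Matrix ι ι ℝ) :
    (B.submatrix e e)ᵀ * B.submatrix e e ≤ (Bᵀ * B).submatrix e e := by
  set E := (1 : Matrix ι ι ℝ).submatrix id e
  have hsub (M : Matrix ι ι ℝ) : M.submatrix e e = Eᵀ * M * E := by
    rw [← Matrix.one_mul M, ← Matrix.mul_one (1 * M),
      submatrix_mul _ _ _ _ _ Function.bijective_id, submatrix_mul _ _ _ _ _ Function.bijective_id,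
      submatrix_id_id, transpose_submatrix, transpose_one, Matrix.one_mul, Matrix.mul_one]
  have hE : Eᵀ * E = 1 := by rw [← Matrix.mul_one Eᵀ, ← hsub, submatrix_one _ he]
  calc (B.submatrix e e)ᵀ * B.submatrix e e = (B * E)ᵀ * (E * Eᵀ) * (B * E) := by
        simp only [hsub, transpose_mul, transpose_transpose, Matrix.mul_assoc]
    _ ≤ (B * E)ᵀ * 1 * (B * E) :=
        transpose_mul_mul_le_transpose_mul_mul (mul_transpose_le_one hE) _
    _ = (Bᵀ * B).submatrix e e := by
        simp only [hsub, transpose_mul, Matrix.mul_one, Matrix.mul_assoc]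

end Compression

section Skew

variable [DecidableEq ι] {N : Matrix ι ι ℝ} {δ : ℝ}

lemma det_eq_zero_of_transpose_eq_neg (hN : Nᵀ = -N) (hι : Odd (Fintype.card ι)) :
    N.det = 0 := by
  have h : N.det = -N.det := by
    conv_lhs => rw [← det_transpose, hN, det_neg, hι.neg_one_pow, neg_one_mul]
  linarith

-- A real skew matrix has no real eigenvalue other than `0`, since `v ⬝ᵥ N *ᵥ v = 0`.
lemma det_one_sub_ne_zero_of_transpose_eq_neg (hN : Nᵀ = -N) : (1 - N).det ≠ 0 := by
  intro h0
  obtain ⟨v, hv0, hv⟩ := exists_mulVec_eq_zero_iff.2 h0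
  have hNv : N *ᵥ v = v := by
    rw [sub_mulVec, one_mulVec, sub_eq_zero] at hv
    exact hv.symm
  have hskew : v ⬝ᵥ (N *ᵥ v) = -(v ⬝ᵥ (N *ᵥ v)) := by
    conv_lhs => rw [dotProduct_mulVec, ← mulVec_transpose, hN, neg_mulVec, dotProduct_comm,
      dotProduct_neg]
  rw [hNv] at hskew
  exact hv0 (dotProduct_self_eq_zero.1 (by linarith))

-- Intermediate value theorem for `t ↦ det (1 - t • N)`, which never vanishes and is `1` at `0`.
lemma det_one_sub_pos_of_transpose_eq_neg (hN : Nᵀ = -N) : 0 < (1 - N).det := by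
  have hne : ∀ t : ℝ, (1 - t • N).det ≠ 0 := fun t ↦
    det_one_sub_ne_zero_of_transpose_eq_neg (by rw [transpose_smul, hN, smul_neg])
  have hcont : ContinuousOn (fun t : ℝ ↦ (1 - t • N).det) (Set.Icc 0 1) :=
    (continuous_const.sub (continuous_id.smul continuous_const)).matrix_det.continuousOn
  by_contra! hle
  obtain ⟨t, -, ht⟩ := intermediate_value_Icc' zero_le_one hcont
    ⟨by simpa using hle, by simp⟩
  exact hne t ht

lemma det_one_sub_sq_of_transpose_eq_neg (hN : Nᵀ = -N) :
    (1 - N).det ^ 2 = (1 + Nᵀ * N).det := by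
  have h : (1 - N)ᵀ * (1 - N) = 1 + Nᵀ * N := by
    rw [transpose_sub, transpose_one, hN]
    simp only [Matrix.sub_mul, Matrix.mul_sub, Matrix.one_mul, Matrix.mul_one, Matrix.neg_mul]
    abel
  rw [← h, det_mul, det_transpose, sq]

lemma one_le_det_one_sub_of_transpose_eq_neg (hN : Nᵀ = -N) : 1 ≤ (1 - N).det := by
  have hG : (Nᵀ * N).PosSemidef := by simpa using posSemidef_conjTranspose_mul_self N
  have hsq : 1 ≤ (1 - N).det ^ 2 := by
    rw [det_one_sub_sq_of_transpose_eq_neg hN, ← one_pow (Fintype.card ι)]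
    refine pow_card_le_det (isHermitian_one.add hG.isHermitian) zero_le_one ?_
    simpa [le_iff] using hG
  nlinarith [det_one_sub_pos_of_transpose_eq_neg hN]

-- In odd dimension `N` is singular, so one eigenvalue of `1 + Nᵀ * N` is `1`.
lemma det_one_sub_le_of_transpose_eq_neg (hN : Nᵀ = -N)
    (hNN : Nᵀ * N ≤ algebraMap ℝ _ (δ ^ 2)) :
    (1 - N).det ≤ (1 + δ ^ 2) ^ (Fintype.card ι / 2) := by
  have hG : (1 + Nᵀ * N).PosSemidef :=
    PosSemidef.one.add (by simpa using posSemidef_conjTranspose_mul_self N)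
  have hle : 1 + Nᵀ * N ≤ algebraMap ℝ _ (1 + δ ^ 2) := by
    simpa [map_add, add_comm] using add_le_add_left hNN 1
  refine le_of_pow_le_pow_left₀ two_ne_zero (by positivity) ?_
  rw [det_one_sub_sq_of_transpose_eq_neg hN, ← pow_mul, mul_comm]
  rcases Nat.even_or_odd (Fintype.card ι) with hι | hι
  · rw [Nat.two_mul_div_two_of_even hι]
    exact det_le_pow_card hG hle
  · rw [Nat.two_mul_odd_div_two (Nat.odd_iff.1 hι)]
    refine det_le_pow_card_sub_one hG hle (one_mem_spectrum_one_add ?_)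
    rw [det_mul, det_eq_zero_of_transpose_eq_neg hN hι, mul_zero]

end Skew

section Perturbation

variable [DecidableEq ι] {W B : Matrix ι ι ℝ} {a δ : ℝ}

lemma transpose_mul_self_conj_le {T : Matrix ι ι ℝ} (ha : 0 < a) (hT : Tᵀ = T)
    (hTT : T * T ≤ algebraMap ℝ _ a⁻¹) (hBB : Bᵀ * B ≤ algebraMap ℝ _ ((δ * a) ^ 2)) :
    (T * B * T)ᵀ * (T * B * T) ≤ algebraMap ℝ _ (δ ^ 2) :=
  calc (T * B * T)ᵀ * (T * B * T) = (B * T)ᵀ * (T * T) * (B * T) := by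
        simp only [transpose_mul, hT, Matrix.mul_assoc]
    _ ≤ (B * T)ᵀ * algebraMap ℝ _ a⁻¹ * (B * T) :=
        transpose_mul_mul_le_transpose_mul_mul hTT _
    _ = a⁻¹ • (Tᵀ * (Bᵀ * B) * T) := by
        simp only [Algebra.algebraMap_eq_smul_one, transpose_mul, Matrix.mul_smul,
          Matrix.smul_mul, Matrix.mul_one, Matrix.mul_assoc]
    _ ≤ a⁻¹ • (Tᵀ * algebraMap ℝ _ ((δ * a) ^ 2) * T) :=
        smul_le_smul_of_nonneg_left (transpose_mul_mul_le_transpose_mul_mul hBB T)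
          (inv_nonneg.2 ha.le)
    _ = (a⁻¹ * (δ * a) ^ 2) • (T * T) := by
        rw [hT, Algebra.algebraMap_eq_smul_one, Matrix.mul_smul, Matrix.mul_one,
          Matrix.smul_mul, smul_smul]
    _ ≤ (a⁻¹ * (δ * a) ^ 2) • algebraMap ℝ _ a⁻¹ :=
        smul_le_smul_of_nonneg_left hTT (by positivity)
    _ = algebraMap ℝ _ (δ ^ 2) := by
        rw [Algebra.algebraMap_eq_smul_one, Algebra.algebraMap_eq_smul_one, smul_smul]
        congr 1
        field_simp

-- `N = S⁻¹ B S⁻¹` with `S = √W`.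
lemma exists_det_sub_eq_det_mul_det_one_sub (ha : 0 < a) (hW : algebraMap ℝ _ a ≤ W)
    (hB : Bᵀ = -B) (hBB : Bᵀ * B ≤ algebraMap ℝ _ ((δ * a) ^ 2)) :
    ∃ N : Matrix ι ι ℝ, Nᵀ = -N ∧ Nᵀ * N ≤ algebraMap ℝ _ (δ ^ 2) ∧
      (W - B).det = W.det * (1 - N).det := by
  have hW0 : W.PosSemidef := posSemidef_of_algebraMap_le ha.le hW
  set S := CFC.sqrt W
  have hSS : S * S = W := CFC.sqrt_mul_sqrt_self W hW0.nonneg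
  have hS : Sᵀ = S := by
    rw [← conjTranspose_eq_transpose_of_trivial]
    exact (nonneg_iff_posSemidef.1 (CFC.sqrt_nonneg W)).isHermitian
  have hdetS : IsUnit S.det := by
    refine (isUnit_iff_ne_zero.2 fun h ↦ ?_)
    have hdetW := pow_card_le_det hW0.isHermitian ha.le hW
    rw [← hSS, det_mul, h, zero_mul] at hdetW
    exact (pow_pos ha _).not_ge hdetW
  set T := S⁻¹
  have hT : Tᵀ = T := by rw [transpose_nonsing_inv, hS]
  have hST : S * T = 1 := mul_nonsing_inv S hdetS
  have hTS : T * S = 1 := nonsing_inv_mul S hdetS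
  have haTT : a • (T * T) ≤ 1 := calc
    a • (T * T) = Tᵀ * algebraMap ℝ _ a * T := by
      rw [hT, Algebra.algebraMap_eq_smul_one, Matrix.mul_smul, Matrix.mul_one, Matrix.smul_mul]
    _ ≤ Tᵀ * W * T := transpose_mul_mul_le_transpose_mul_mul hW T
    _ = 1 := by rw [hT, ← hSS, ← Matrix.mul_assoc, hTS, Matrix.one_mul, hST]
  have hTT : T * T ≤ algebraMap ℝ _ a⁻¹ := calc
    T * T = a⁻¹ • (a • (T * T)) := by rw [smul_smul, inv_mul_cancel₀ ha.ne', one_smul]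
    _ ≤ a⁻¹ • 1 := smul_le_smul_of_nonneg_left haTT (inv_nonneg.2 ha.le)
    _ = algebraMap ℝ _ a⁻¹ := (Algebra.algebraMap_eq_smul_one _).symm
  refine ⟨T * B * T, ?_, ?_, ?_⟩
  · simp only [transpose_mul, hT, hB, Matrix.mul_neg, Matrix.neg_mul, Matrix.mul_assoc]
  · exact transpose_mul_self_conj_le ha hT hTT hBB
  · have hfac : W - B = S * (1 - T * B * T) * S := by
      rw [Matrix.mul_sub, Matrix.sub_mul, Matrix.mul_one, hSS, ← Matrix.mul_assoc,
        ← Matrix.mul_assoc, hST, Matrix.one_mul, Matrix.mul_assoc, hTS, Matrix.mul_one]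
    rw [hfac, det_mul, det_mul, ← hSS, det_mul]
    ring

variable (ha : 0 < a) (hW : algebraMap ℝ _ a ≤ W) (hB : Bᵀ = -B)
  (hBB : Bᵀ * B ≤ algebraMap ℝ _ ((δ * a) ^ 2))
include ha hW hB hBB

lemma det_le_det_sub_of_transpose_eq_neg : W.det ≤ (W - B).det := by
  obtain ⟨N, hN, -, hdet⟩ := exists_det_sub_eq_det_mul_det_one_sub ha hW hB hBB
  rw [hdet]
  exact le_mul_of_one_le_right (posSemidef_of_algebraMap_le ha.le hW).det_nonneg
    (one_le_det_one_sub_of_transpose_eq_neg hN)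

lemma det_sub_le_of_transpose_eq_neg :
    (W - B).det ≤ (1 + δ ^ 2) ^ (Fintype.card ι / 2) * W.det := by
  obtain ⟨N, hN, hNN, hdet⟩ := exists_det_sub_eq_det_mul_det_one_sub ha hW hB hBB
  rw [hdet, mul_comm]
  exact mul_le_mul_of_nonneg_right (det_one_sub_le_of_transpose_eq_neg hN hNN)
    (posSemidef_of_algebraMap_le ha.le hW).det_nonneg

end Perturbation

end Matrix

section ElementarySymmetric

variable {n k : ℕ} {M W B : Matrix (Fin n) (Fin n) ℝ} {a c δ : ℝ}

lemma choose_mul_pow_le_Sk (hM : M.IsHermitian) (hc : 0 ≤ c) (h : algebraMap ℝ _ c ≤ M) :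
    n.choose k * c ^ k ≤ Sk k M := calc
  n.choose k * c ^ k = ∑ _s : {s : Finset (Fin n) // s.card = k}, c ^ k := by
    simp [Fintype.card_finset_len]
  _ ≤ Sk k M := Finset.sum_le_sum fun s _ ↦ by
    simpa using pow_card_le_det (hM.submatrix _) hc
      (algebraMap_le_submatrix (s.1.orderEmbOfFin s.2).injective h)

lemma Sk_le_choose_mul_pow (hM : M.PosSemidef) (h : M ≤ algebraMap ℝ _ c) :
    Sk k M ≤ n.choose k * c ^ k := calc
  Sk k M ≤ ∑ _s : {s : Finset (Fin n) // s.card = k}, c ^ k := Finset.sum_le_sum fun s _ ↦ by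
    simpa using det_le_pow_card (hM.submatrix _)
      (submatrix_le_algebraMap (s.1.orderEmbOfFin s.2).injective h)
  _ = n.choose k * c ^ k := by simp [Fintype.card_finset_len]

variable (ha : 0 < a) (hW : algebraMap ℝ _ a ≤ W) (hB : Bᵀ = -B)
  (hBB : Bᵀ * B ≤ algebraMap ℝ _ ((δ * a) ^ 2))
include ha hW hB hBB

lemma Sk_le_Sk_sub_of_transpose_eq_neg : Sk k W ≤ Sk k (W - B) :=
  Finset.sum_le_sum fun s _ ↦ by
    have he := (s.1.orderEmbOfFin s.2).injective
    exact det_le_det_sub_of_transpose_eq_neg (W := W.submatrix _ _) (B := B.submatrix _ _) ha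
      (algebraMap_le_submatrix he hW) (by rw [transpose_submatrix, hB]; rfl)
      ((transpose_mul_self_submatrix_le he B).trans (submatrix_le_algebraMap he hBB))

lemma Sk_sub_le_of_transpose_eq_neg : Sk k (W - B) ≤ (1 + δ ^ 2) ^ (k / 2) * Sk k W := by
  rw [Sk, Sk, Finset.mul_sum]
  refine Finset.sum_le_sum fun s _ ↦ ?_
  have he := (s.1.orderEmbOfFin s.2).injective
  have h := det_sub_le_of_transpose_eq_neg (W := W.submatrix _ _) (B := B.submatrix _ _) ha
    (algebraMap_le_submatrix he hW) (by rw [transpose_submatrix, hB]; rfl)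
    ((transpose_mul_self_submatrix_le he B).trans (submatrix_le_algebraMap he hBB))
  rwa [Fintype.card_fin] at h

end ElementarySymmetric

section

variable {n : ℕ} {M : Matrix (Fin n) (Fin n) ℝ} {c : ℝ}

lemma algebraMap_lamMin_le (hM : M.IsHermitian) : algebraMap ℝ _ (lamMin M) ≤ M := by
  rw [hM.algebraMap_le_iff, lamMin, dif_pos hM]
  exact fun i ↦ ciInf_le (Set.finite_range _).bddBelow i

lemma le_algebraMap_lamMax (hM : M.IsHermitian) : M ≤ algebraMap ℝ _ (lamMax M) := by
  rw [hM.le_algebraMap_iff, lamMax, dif_pos hM]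
  exact fun i ↦ le_ciSup (Set.finite_range _).bddAbove i

lemma lamMin_pos [NeZero n] (hM : M.PosDef) : 0 < lamMin M := by
  obtain ⟨i, hi⟩ := exists_eq_ciInf_of_finite (f := hM.isHermitian.eigenvalues)
  rw [lamMin, dif_pos hM.isHermitian, ← hi]
  exact hM.eigenvalues_pos i

lemma lamMax_pos [NeZero n] (hM : M.PosDef) : 0 < lamMax M := by
  rw [lamMax, dif_pos hM.isHermitian]
  exact (hM.eigenvalues_pos 0).trans_le (le_ciSup (Set.finite_range _).bddAbove 0)

lemma transpose_mul_self_le_of_opNorm_le (h : opNorm M ≤ c) :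
    Mᵀ * M ≤ algebraMap ℝ _ (c ^ 2) := by
  have hsq (v : Fin n → ℝ) : ‖WithLp.toLp 2 v‖ ^ 2 = v ⬝ᵥ v := by
    rw [EuclideanSpace.norm_sq_eq]
    simp [dotProduct, sq]
  have hMv (v : Fin n → ℝ) : ‖WithLp.toLp 2 (M *ᵥ v)‖ ≤ c * ‖WithLp.toLp 2 v‖ := by
    rw [← toEuclideanCLM_toLp]
    exact (ContinuousLinearMap.le_opNorm _ _).trans (mul_le_mul_of_nonneg_right h (norm_nonneg _))
  rw [le_iff]
  refine PosSemidef.of_dotProduct_mulVec_nonneg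
    (by simp [IsHermitian, transpose_mul, Algebra.algebraMap_eq_smul_one]) fun v ↦ ?_
  have h2 := pow_le_pow_left₀ (norm_nonneg _) (hMv v) 2
  rw [mul_pow, hsq, hsq] at h2
  simpa [sub_mulVec, Algebra.algebraMap_eq_smul_one, smul_mulVec, ← mulVec_mulVec,
    dotProduct_mulVec _ Mᵀ, vecMul_transpose] using h2

end

theorem eigenvalue_bounds_admissible_general {n k : ℕ} (hk : 2 ≤ k) (hkn : k ≤ n)
    (K : Set (Fin n → ℝ))
    (B : (Fin n → ℝ) → Matrix (Fin n) (Fin n) ℝ)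
    (f : (Fin n → ℝ) → ℝ) (δ f₀ f₁ : ℝ)
    (hf0 : 0 < f₀)
    (hB : ∀ x ∈ K, (B x)ᵀ = -(B x))
    (ω : (Fin n → ℝ) → Matrix (Fin n) (Fin n) ℝ)
    (hpos : ∀ x ∈ K, (ω x).PosDef)
    (hBnorm : ∀ x ∈ K, opNorm (B x) ≤ δ * lamMin (ω x))
    (heq : ∀ x ∈ K, Sk k (ω x - B x) = f x)
    (hf : ∀ x ∈ K, f₀ ≤ f x ∧ f x ≤ f₁) :
    ∀ x ∈ K,
      lamMin (ω x) ≤ (f₁ / (n.choose k : ℝ)) ^ ((1 : ℝ) / k) ∧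
      ((((1 + δ ^ 2) ^ (k / 2) : ℝ))⁻¹ * f₀ / (n.choose k : ℝ)) ^ ((1 : ℝ) / k)
        ≤ lamMax (ω x) := by
  intro x hx
  have : NeZero n := ⟨by omega⟩
  have hW := hpos x hx
  have ha := lamMin_pos hW
  have hlamMin := algebraMap_lamMin_le hW.isHermitian
  have hBB := transpose_mul_self_le_of_opNorm_le (hBnorm x hx)
  have hlow : n.choose k * lamMin (ω x) ^ k ≤ Sk k (ω x) :=
    choose_mul_pow_le_Sk hW.isHermitian ha.le hlamMin
  have hup : Sk k (ω x) ≤ n.choose k * lamMax (ω x) ^ k :=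
    Sk_le_choose_mul_pow hW.posSemidef (le_algebraMap_lamMax hW.isHermitian)
  have hSk_le_f : Sk k (ω x) ≤ f x :=
    heq x hx ▸ Sk_le_Sk_sub_of_transpose_eq_neg ha hlamMin (hB x hx) hBB
  have hf_le_Sk : f x ≤ (1 + δ ^ 2) ^ (k / 2) * Sk k (ω x) :=
    heq x hx ▸ Sk_sub_le_of_transpose_eq_neg ha hlamMin (hB x hx) hBB
  obtain ⟨hf₀, hf₁⟩ := hf x hx
  have hC : (0 : ℝ) < n.choose k := by exact_mod_cast Nat.choose_pos hkn
  have hP : (0 : ℝ) < (1 + δ ^ 2) ^ (k / 2) := by positivity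
  have hk0 : (0 : ℝ) < k := by exact_mod_cast (by omega : 0 < k)
  rw [one_div]
  constructor
  · rw [Real.le_rpow_inv_iff_of_pos ha.le (div_pos (by linarith) hC).le hk0, Real.rpow_natCast,
      le_div_iff₀ hC]
    linarith
  · rw [Real.rpow_inv_le_iff_of_pos (by positivity) (lamMax_pos hW).le hk0, Real.rpow_natCast,
      div_le_iff₀ hC, inv_mul_le_iff₀ hP]
    linarith [mul_le_mul_of_nonneg_left hup hP.le]

/-- A priori eigenvalue bounds for strictly admissible / δ-admissible solutions of
S_k(D²u - A - B) = f. -/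
theorem eigenvalue_bounds_admissible {n k : ℕ} (hk : 2 ≤ k) (hkn : k ≤ n)
    (K : Set (Fin n → ℝ)) (u : (Fin n → ℝ) → ℝ) (hu : ContDiff ℝ 2 u)
    (A B : (Fin n → ℝ) → Matrix (Fin n) (Fin n) ℝ)
    (f : (Fin n → ℝ) → ℝ) (δ f₀ f₁ : ℝ)
    (hδ0 : 0 < δ) (hδ1 : δ < 1) (hf0 : 0 < f₀)
    (hA : ∀ x ∈ K, (A x)ᵀ = A x) (hB : ∀ x ∈ K, (B x)ᵀ = -(B x))
    (ω : (Fin n → ℝ) → Matrix (Fin n) (Fin n) ℝ)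
    (hω : ∀ x, ω x =
      Matrix.of (fun i j => iteratedFDeriv ℝ 2 u x ![Pi.single i 1, Pi.single j 1]) - A x)
    (hpos : ∀ x ∈ K, (ω x).PosDef)
    (hBnorm : ∀ x ∈ K, opNorm (B x) ≤ δ * lamMin (ω x))
    (heq : ∀ x ∈ K, Sk k (ω x - B x) = f x)
    (hf : ∀ x ∈ K, f₀ ≤ f x ∧ f x ≤ f₁) :
    ∀ x ∈ K,
      lamMin (ω x) ≤ (f₁ / (n.choose k : ℝ)) ^ ((1 : ℝ) / k) ∧
      ((((1 + δ ^ 2) ^ (k / 2) : ℝ))⁻¹ * f₀ / (n.choose k : ℝ)) ^ ((1 : ℝ) / k)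
        ≤ lamMax (ω x) :=
  eigenvalue_bounds_admissible_general hk hkn K B f δ f₀ f₁ hf0 hB ω hpos hBnorm heq hf
end
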